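/- Fix T ≥ 1, n ≥ m ≥ 0 and unitaries C_1,…,C_T on H_state = (ℂ²)^{⊗n}. Then the unary-clock Feynman–Kitaev Hamiltonian H' = H_in + H_prop + H_stab on H_time ⊗ H_state is positive semidefinite, and its kernel is exactly the set of history states: ker H' = { Ψ_ξ : ξ ∈ (ℂ²)^{⊗m} } (a subspace, since ξ ↦ Ψ_ξ is linear). In particular the ground energy of H' is 0 and every zero-energy state is a history state of the circuit C_T⋯C_1 on an input of the form ξ ⊗ |0⟩^{⊗(n−m)}. -/

import Mathlib

open scoped Classical ComplexOrder
open Matrix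

noncomputable section
namespace FK

/-- The unary clock state `unary(t)` on `T` clock qubits: `c_s = 1` for the first `t`
qubits (`0`-based: positions `s < t`) and `0` afterwards. -/
def unaryClock (T t : ℕ) : Fin T → Fin 2 := fun s => if (s : ℕ) < t then 1 else 0

/-- The product `C_t ⋯ C_1` of the first `t` gates (empty product = identity). -/
def prodMat {ι : Type} [Fintype ι] [DecidableEq ι]
    (C : ℕ → Matrix ι ι ℂ) : ℕ → Matrix ι ι ℂ
  | 0 => 1
  | t + 1 => C (t + 1) * prodMat C t

/-- The injection `ξ ↦ ξ ⊗ |0⟩^{⊗(n-m)}` of an `m`-qubit vector into `n` qubits. -/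
def inject (n m : ℕ) (hmn : m ≤ n) (ξ : (Fin m → Fin 2) → ℂ) :
    (Fin n → Fin 2) → ℂ :=
  fun b =>
    if ∀ i : Fin n, m ≤ (i : ℕ) → b i = 0 then ξ (fun j => b (Fin.castLE hmn j)) else 0

/-- The history state `Ψ_ξ = (1/√(T+1)) Σ_t |unary(t)⟩ ⊗ C_t⋯C_1 (ξ ⊗ |0⟩^{⊗(n-m)})`. -/
def historyState (T n m : ℕ) (hmn : m ≤ n)
    (C : ℕ → Matrix (Fin n → Fin 2) (Fin n → Fin 2) ℂ)
    (ξ : (Fin m → Fin 2) → ℂ) :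
    ((Fin T → Fin 2) × (Fin n → Fin 2)) → ℂ :=
  fun p => (Real.sqrt (T + 1) : ℂ)⁻¹ *
    ∑ t ∈ Finset.range (T + 1),
      (if p.1 = unaryClock T t then 1 else 0) *
        (prodMat C t).mulVec (inject n m hmn ξ) p.2

/-- Kronecker product of a time-register operator and a state-register operator. -/
def kron {τ σ : Type} (Mt : Matrix τ τ ℂ) (Ms : Matrix σ σ ℂ) :
    Matrix (τ × σ) (τ × σ) ℂ :=
  fun p r => Mt p.1 r.1 * Ms p.2 r.2

/-- `H_in = |0⟩⟨0|_{c_1} ⊗ Σ_{s=m+1}^{n} |1⟩⟨1|_{state(s)}`. -/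
def Hin (T n m : ℕ) (hT : 0 < T) :
    Matrix ((Fin T → Fin 2) × (Fin n → Fin 2)) ((Fin T → Fin 2) × (Fin n → Fin 2)) ℂ :=
  Matrix.diagonal (fun p =>
    if p.1 ⟨0, hT⟩ = 0 then
      ((Finset.univ.filter (fun s : Fin n => m ≤ (s : ℕ) ∧ p.2 s = 1)).card : ℂ)
    else 0)

/-- `H_stab = Σ_{s=1}^{T-1} |0⟩⟨0|_{c_s}|1⟩⟨1|_{c_{s+1}} ⊗ I` (`0`-based: pairs
`(s, s+1)` for `s = 0, …, T-2`). -/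
def Hstab (T n : ℕ) :
    Matrix ((Fin T → Fin 2) × (Fin n → Fin 2)) ((Fin T → Fin 2) × (Fin n → Fin 2)) ℂ :=
  ∑ s ∈ Finset.range (T - 1),
    Matrix.diagonal (fun p =>
      if h : s + 1 < T then
        (if p.1 ⟨s, Nat.lt_of_succ_lt h⟩ = 0 ∧ p.1 ⟨s + 1, h⟩ = 1 then 1 else 0)
      else 0)

/-- The clock-transition operator `A_{t,t-1}` for `t = a+1` (so `c_t` is the clock qubit
with `0`-based index `a`): it acts as `|1⟩⟨0|` on `c_t`, as `|1⟩⟨1|` on `c_{t-1}` (omitted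
when `t = 1`), as `|0⟩⟨0|` on `c_{t+1}` (omitted when `t = T`), and as the identity on the
remaining clock qubits. -/
def Aop (T : ℕ) (a : Fin T) : Matrix (Fin T → Fin 2) (Fin T → Fin 2) ℂ :=
  fun u v =>
    if (u a = 1 ∧ v a = 0 ∧ (∀ s : Fin T, s ≠ a → u s = v s) ∧
        (∀ _ : 1 ≤ (a : ℕ),
          v ⟨(a : ℕ) - 1, Nat.lt_of_le_of_lt (Nat.sub_le _ _) a.isLt⟩ = 1) ∧
        (∀ h : (a : ℕ) + 1 < T, v ⟨(a : ℕ) + 1, h⟩ = 0)) then 1 else 0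

/-- `H_prop = Σ_{t=1}^{T} (1/2)[(A_{t,t} + A_{t-1,t-1}) ⊗ I - A_{t,t-1} ⊗ C_t
 - A_{t,t-1}† ⊗ C_t†]`, with `A_{t,t} = A_{t,t-1}A_{t,t-1}†` and
`A_{t-1,t-1} = A_{t,t-1}†A_{t,t-1}`. -/
def Hprop (T n : ℕ) (C : ℕ → Matrix (Fin n → Fin 2) (Fin n → Fin 2) ℂ) :
    Matrix ((Fin T → Fin 2) × (Fin n → Fin 2)) ((Fin T → Fin 2) × (Fin n → Fin 2)) ℂ :=
  ∑ a : Fin T, (1 / 2 : ℂ) •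
    (kron (Aop T a * (Aop T a)ᴴ + (Aop T a)ᴴ * Aop T a) 1
      - kron (Aop T a) (C ((a : ℕ) + 1))
      - kron ((Aop T a)ᴴ) ((C ((a : ℕ) + 1))ᴴ))


/-!
For unitary gates each of `H_in`, `H_stab`, `H_prop` is positive semidefinite: the first two
are diagonal with nonnegative entries, and since `A_{t,t-1}` is a partial isometry,
`H_prop = Σ_t ½ X_t X_t†` with `X_t = A_{t,t-1} ⊗ C_t - A_{t-1,t-1} ⊗ I`. Hence `ker H'` is the
intersection of the three kernels. `H_stab ψ = 0` says that `ψ` lives on the unary clock states;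
for such `ψ`, `X_t† ψ = 0` says that the clock-`t` component of `ψ` is `C_t` applied to its
clock-`(t-1)` component, and `H_in ψ = 0` says that the clock-`0` component has its last
`n - m` qubits in `|0⟩`. These three conditions characterise the history states.
-/

end FK

namespace Matrix

open scoped Kronecker

section PosSemidefKernel

variable {𝕜 ι κ : Type*} [RCLike 𝕜] [Fintype ι]

theorem PosSemidef.add_mulVec_eq_zero_iff {A B : Matrix ι ι 𝕜} (hA : A.PosSemidef)
    (hB : B.PosSemidef) (v : ι → 𝕜) :
    (A + B) *ᵥ v = 0 ↔ A *ᵥ v = 0 ∧ B *ᵥ v = 0 := by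
  rw [← (hA.add hB).dotProduct_mulVec_zero_iff, ← hA.dotProduct_mulVec_zero_iff,
    ← hB.dotProduct_mulVec_zero_iff, add_mulVec, dotProduct_add]
  exact add_eq_zero_iff_of_nonneg (hA.dotProduct_mulVec_nonneg v) (hB.dotProduct_mulVec_nonneg v)

theorem PosSemidef.sum_mulVec_eq_zero_iff {s : Finset κ} {A : κ → Matrix ι ι 𝕜}
    (hA : ∀ i ∈ s, (A i).PosSemidef) (v : ι → 𝕜) :
    (∑ i ∈ s, A i) *ᵥ v = 0 ↔ ∀ i ∈ s, A i *ᵥ v = 0 := by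
  rw [← (posSemidef_sum s hA).dotProduct_mulVec_zero_iff, sum_mulVec, dotProduct_sum,
    Finset.sum_eq_zero_iff_of_nonneg fun i hi => (hA i hi).dotProduct_mulVec_nonneg v]
  exact forall₂_congr fun i hi => (hA i hi).dotProduct_mulVec_zero_iff v

end PosSemidefKernel

variable {R ι τ σ : Type*} [Fintype ι] [Fintype τ] [Fintype σ]

theorem diagonal_mulVec_eq_zero_iff [Semiring R] [NoZeroDivisors R] [DecidableEq ι]
    (d v : ι → R) : diagonal d *ᵥ v = 0 ↔ ∀ i, d i ≠ 0 → v i = 0 := by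
  simp only [funext_iff, mulVec_diagonal, Pi.zero_apply, mul_eq_zero]
  exact forall_congr' fun i => or_iff_not_imp_left

theorem kronecker_mulVec_apply [CommSemiring R] (M : Matrix τ τ R) (N : Matrix σ σ R)
    (w : τ × σ → R) (i : τ) (j : σ) :
    ((M ⊗ₖ N) *ᵥ w) (i, j) = ∑ k, M i k * (N *ᵥ fun l => w (k, l)) j := by
  simp only [mulVec, dotProduct, Fintype.sum_prod_type, kroneckerMap_apply, Finset.mul_sum,
    mul_assoc]

theorem conjTranspose_mulVec_eq_iff [CommRing R] [StarRing R] [DecidableEq ι]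
    {U : Matrix ι ι R} (hU : U ∈ unitaryGroup ι R) {x y : ι → R} :
    Uᴴ *ᵥ x = y ↔ x = U *ᵥ y := by
  constructor
  · rintro rfl
    rw [mulVec_mulVec, ← star_eq_conjTranspose, mem_unitaryGroup_iff.1 hU, one_mulVec]
  · rintro rfl
    rw [mulVec_mulVec, ← star_eq_conjTranspose, mem_unitaryGroup_iff'.1 hU, one_mulVec]

theorem kronecker_sub_mul_conjTranspose [CommRing R] [StarRing R] [DecidableEq τ]
    [DecidableEq σ] {A : Matrix τ τ R} {U : Matrix σ σ R} (hA : A * (Aᴴ * A) = A)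
    (hU : U * Uᴴ = 1) :
    (A ⊗ₖ U - (Aᴴ * A) ⊗ₖ (1 : Matrix σ σ R)) * (A ⊗ₖ U - (Aᴴ * A) ⊗ₖ (1 : Matrix σ σ R))ᴴ =
      (A * Aᴴ + Aᴴ * A) ⊗ₖ (1 : Matrix σ σ R) - A ⊗ₖ U - Aᴴ ⊗ₖ Uᴴ := by
  have hA' : Aᴴ * A * Aᴴ = Aᴴ := by
    simpa only [conjTranspose_mul, conjTranspose_conjTranspose, Matrix.mul_assoc]
      using congrArg conjTranspose hA
  have hP : Aᴴ * A * (Aᴴ * A) = Aᴴ * A := by rw [← Matrix.mul_assoc, hA']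
  simp only [conjTranspose_sub, conjTranspose_kronecker, conjTranspose_mul,
    conjTranspose_conjTranspose, conjTranspose_one, sub_mul, mul_sub, ← mul_kronecker_mul, hA,
    hA', hP, hU, Matrix.mul_one, Matrix.one_mul, add_kronecker]
  abel

end Matrix

namespace FK

open scoped Kronecker

section Clock

variable {T : ℕ}

theorem unaryClock_apply_eq_one_iff {t : ℕ} (s : Fin T) :
    unaryClock T t s = 1 ↔ (s : ℕ) < t := by
  unfold unaryClock; split <;> simp_all

theorem unaryClock_apply_eq_zero_iff {t : ℕ} (s : Fin T) :
    unaryClock T t s = 0 ↔ t ≤ (s : ℕ) := by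
  unfold unaryClock; split <;> simp_all

theorem unaryClock_injOn : Set.InjOn (unaryClock T) (Set.Iic T) := by
  intro t ht t' ht' h
  by_contra hne
  wlog hlt : t < t' generalizing t t'
  · exact this ht' ht h.symm (Ne.symm hne) (by omega)
  have := congrFun h ⟨t, lt_of_lt_of_le hlt ht'⟩
  simp [unaryClock, hlt] at this

def HasRise (T : ℕ) (u : Fin T → Fin 2) : Prop :=
  ∃ s, ∃ hs : s + 1 < T, u ⟨s, Nat.lt_of_succ_lt hs⟩ = 0 ∧ u ⟨s + 1, hs⟩ = 1

theorem not_hasRise_iff {u : Fin T → Fin 2} : ¬HasRise T u ↔ ∃ t ≤ T, u = unaryClock T t := by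
  constructor
  · intro h
    -- extended by zeros, a clock without a rise is antitone; `t` is its first zero
    let g : ℕ → Fin 2 := fun k => if hk : k < T then u ⟨k, hk⟩ else 0
    have hg : Antitone g := antitone_nat_of_succ_le fun k => by
      by_cases hk : k + 1 < T
      · have : ¬(u ⟨k, _⟩ = 0 ∧ u ⟨k + 1, hk⟩ = 1) := fun h01 => h ⟨k, hk, h01⟩
        simp only [g, dif_pos hk, dif_pos (Nat.lt_of_succ_lt hk)]
        omega
      · simp [g, dif_neg hk]
    have hex : ∃ k, g k = 0 := ⟨T, by simp [g]⟩
    refine ⟨Nat.find hex, Nat.find_min' hex (by simp [g]), funext fun s => ?_⟩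
    have hs : u s = g s := by simp [g]
    rw [hs, unaryClock]
    split_ifs with hlt
    · have := Nat.find_min hex hlt
      omega
    · have := hg (not_lt.1 hlt)
      rw [Nat.find_spec hex] at this
      exact le_antisymm this (Fin.zero_le _)
  · rintro ⟨t, -, rfl⟩ ⟨s, hs, h0, h1⟩
    rw [unaryClock_apply_eq_zero_iff] at h0
    rw [unaryClock_apply_eq_one_iff] at h1
    simp only at h0 h1
    omega

end Clock

section Transition

variable {T : ℕ}

/-- The clock configurations on which `A_{t,t-1}` (with `t = a + 1`) acts nontrivially. -/
def CanAdvance (T : ℕ) (a : Fin T) (v : Fin T → Fin 2) : Prop :=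
  v a = 0 ∧
  (∀ _ : 1 ≤ (a : ℕ),
    v ⟨(a : ℕ) - 1, Nat.lt_of_le_of_lt (Nat.sub_le _ _) a.isLt⟩ = 1) ∧
  (∀ h : (a : ℕ) + 1 < T, v ⟨(a : ℕ) + 1, h⟩ = 0)

theorem Aop_apply (a : Fin T) (u v : Fin T → Fin 2) :
    Aop T a u v = if u = Function.update v a 1 ∧ CanAdvance T a v then 1 else 0 := by
  simp only [Aop, CanAdvance, Function.eq_update_iff]
  congr 1
  exact propext (by tauto)

theorem conjTranspose_Aop_apply (a : Fin T) (u v : Fin T → Fin 2) :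
    (Aop T a)ᴴ u v = if v = Function.update u a 1 ∧ CanAdvance T a u then 1 else 0 := by
  rw [conjTranspose_apply, Aop_apply]
  split <;> simp

theorem conjTranspose_Aop_mul_Aop (a : Fin T) :
    (Aop T a)ᴴ * Aop T a = diagonal fun v => if CanAdvance T a v then 1 else 0 := by
  ext v w
  have hinj : CanAdvance T a v → CanAdvance T a w →
      (Function.update v a 1 = Function.update w a 1 ↔ v = w) := fun hv hw =>
    ⟨fun h => by
      rw [← Function.update_eq_self a v, ← Function.update_eq_self a w, hv.1, hw.1,
        ← Function.update_idem 1 0 v, ← Function.update_idem 1 0 w, h], fun h => h ▸ rfl⟩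
  simp only [mul_apply, conjTranspose_Aop_apply, Aop_apply, ite_zero_mul_ite_zero, mul_one,
    diagonal_apply]
  rw [Finset.sum_eq_single (Function.update v a 1) (fun x _ hx => if_neg fun h => hx h.1.1)
    (by simp)]
  rcases eq_or_ne v w with rfl | hvw
  · simp
  · rw [if_neg hvw, if_neg]
    rintro ⟨⟨-, hv⟩, h, hw⟩
    exact hvw ((hinj hv hw).1 h)

theorem Aop_mul_conjTranspose_Aop_mul_Aop (a : Fin T) :
    Aop T a * ((Aop T a)ᴴ * Aop T a) = Aop T a := by
  rw [conjTranspose_Aop_mul_Aop]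
  ext u v
  rw [mul_diagonal, Aop_apply]
  split_ifs <;> simp_all

theorem canAdvance_unaryClock_iff {a : Fin T} {t : ℕ} :
    CanAdvance T a (unaryClock T t) ↔ t = a := by
  simp only [CanAdvance, unaryClock_apply_eq_one_iff, unaryClock_apply_eq_zero_iff]
  omega

theorem update_unaryClock (a : Fin T) :
    Function.update (unaryClock T a) a 1 = unaryClock T (a + 1) := by
  funext s
  rcases eq_or_ne s a with rfl | hs
  · simp [unaryClock]
  · rw [Function.update_of_ne hs]
    have := Fin.val_ne_of_ne hs
    simp only [unaryClock]
    split_ifs <;> omega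

theorem CanAdvance.hasRise_update {a : Fin T} {u : Fin T → Fin 2} (hc : CanAdvance T a u)
    (hu : HasRise T u) : HasRise T (Function.update u a 1) := by
  -- the side conditions of `CanAdvance` force a unary `update u a 1` to be `unary(a + 1)`
  by_contra h
  obtain ⟨t, -, ht⟩ := not_hasRise_iff.1 h
  refine not_hasRise_iff.2 ⟨a, a.isLt.le, ?_⟩ hu
  have hat : (a : ℕ) < t := by
    rw [← unaryClock_apply_eq_one_iff, ← ht, Function.update_self]
  have hta : ∀ h : (a : ℕ) + 1 < T, t ≤ a + 1 := fun h => by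
    have := congrFun ht ⟨a + 1, h⟩
    rwa [Function.update_of_ne (by simp [Fin.ext_iff]), hc.2.2 h, eq_comm,
      unaryClock_apply_eq_zero_iff] at this
  funext s
  rcases eq_or_ne s a with rfl | hs
  · rw [hc.1, eq_comm, unaryClock_apply_eq_zero_iff]
  · rw [← Function.update_of_ne hs 1 u, ht]
    have := Fin.val_ne_of_ne hs
    have := s.isLt
    simp only [unaryClock]
    by_cases h : (a : ℕ) + 1 < T
    · have := hta h
      split_ifs <;> omega
    · split_ifs <;> omega

end Transition

section History

variable {T n m : ℕ} {σ : Type}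

def clockSlice (T : ℕ) (v : (Fin T → Fin 2) × σ → ℂ) (t : ℕ) : σ → ℂ :=
  fun b => v (unaryClock T t, b)

def VanishesOffUnary (T : ℕ) (v : (Fin T → Fin 2) × σ → ℂ) : Prop :=
  ∀ u b, HasRise T u → v (u, b) = 0

theorem eq_of_clockSlice_eq {v w : (Fin T → Fin 2) × σ → ℂ} (hv : VanishesOffUnary T v)
    (hw : VanishesOffUnary T w) (h : ∀ t ≤ T, clockSlice T v t = clockSlice T w t) :
    v = w := by
  funext ⟨u, b⟩
  by_cases hu : HasRise T u
  · rw [hv u b hu, hw u b hu]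
  · obtain ⟨t, ht, rfl⟩ := not_hasRise_iff.1 hu
    exact congrFun (h t ht) b

theorem inject_smul (hmn : m ≤ n) (c : ℂ) (ξ : (Fin m → Fin 2) → ℂ) :
    inject n m hmn (c • ξ) = c • inject n m hmn ξ := by
  funext b
  simp only [inject, Pi.smul_apply, smul_eq_mul]
  split_ifs <;> simp

theorem inject_apply_eq_zero (hmn : m ≤ n) (ξ : (Fin m → Fin 2) → ℂ) {b : Fin n → Fin 2}
    (hb : ∃ i : Fin n, m ≤ i ∧ b i = 1) : inject n m hmn ξ b = 0 := by
  obtain ⟨i, hi, hbi⟩ := hb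
  exact if_neg fun h => by simp [h i hi] at hbi

theorem inject_restrict (hmn : m ≤ n) {w : (Fin n → Fin 2) → ℂ}
    (hw : ∀ b, (∃ i : Fin n, m ≤ i ∧ b i = 1) → w b = 0) :
    inject n m hmn (fun j => w fun i => if h : (i : ℕ) < m then j ⟨i, h⟩ else 0) = w := by
  funext b
  unfold inject
  split_ifs with htail
  · dsimp only
    congr 1
    funext i
    split_ifs with hi
    · rfl
    · exact (htail i (by omega)).symm
  · simp only [not_forall] at htail
    obtain ⟨i, hi, hbi⟩ := htail
    exact (hw b ⟨i, hi, by omega⟩).symm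

theorem vanishesOffUnary_historyState (hmn : m ≤ n)
    (C : ℕ → Matrix (Fin n → Fin 2) (Fin n → Fin 2) ℂ) (ξ : (Fin m → Fin 2) → ℂ) :
    VanishesOffUnary T (historyState T n m hmn C ξ) := by
  intro u b hu
  refine mul_eq_zero_of_right _ (Finset.sum_eq_zero fun t ht => ?_)
  rw [if_neg, zero_mul]
  rintro rfl
  exact not_hasRise_iff.2 ⟨t, Nat.lt_succ_iff.1 (Finset.mem_range.1 ht), rfl⟩ hu

theorem clockSlice_historyState (hmn : m ≤ n)
    (C : ℕ → Matrix (Fin n → Fin 2) (Fin n → Fin 2) ℂ) (ξ : (Fin m → Fin 2) → ℂ) {t : ℕ}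
    (ht : t ≤ T) :
    clockSlice T (historyState T n m hmn C ξ) t =
      (Real.sqrt (T + 1) : ℂ)⁻¹ • (prodMat C t *ᵥ inject n m hmn ξ) := by
  funext b
  simp only [clockSlice, historyState, Pi.smul_apply, smul_eq_mul]
  congr 1
  rw [Finset.sum_eq_single t, if_pos rfl, one_mul]
  · intro t' ht' hne
    rw [if_neg fun h => hne (unaryClock_injOn ht (by simpa [Nat.lt_succ_iff] using ht') h).symm,
      zero_mul]
  · simp [ht]

theorem exists_eq_historyState_iff (hmn : m ≤ n)
    (C : ℕ → Matrix (Fin n → Fin 2) (Fin n → Fin 2) ℂ)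
    {v : (Fin T → Fin 2) × (Fin n → Fin 2) → ℂ} :
    (∃ ξ, v = historyState T n m hmn C ξ) ↔
      VanishesOffUnary T v ∧
        (∀ a : Fin T, clockSlice T v (a + 1) = C (a + 1) *ᵥ clockSlice T v a) ∧
        ∀ b, (∃ i : Fin n, m ≤ i ∧ b i = 1) → clockSlice T v 0 b = 0 := by
  constructor
  · rintro ⟨ξ, rfl⟩
    refine ⟨vanishesOffUnary_historyState hmn C ξ, fun a => ?_, fun b hb => ?_⟩
    · rw [clockSlice_historyState hmn C ξ a.isLt, clockSlice_historyState hmn C ξ a.isLt.le,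
        prodMat, ← mulVec_mulVec, mulVec_smul]
    · rw [clockSlice_historyState hmn C ξ (Nat.zero_le T), prodMat, one_mulVec,
        Pi.smul_apply, inject_apply_eq_zero hmn ξ hb, smul_zero]
  · rintro ⟨hv, hstep, hin⟩
    have hslice : ∀ t ≤ T, clockSlice T v t = prodMat C t *ᵥ clockSlice T v 0 := by
      intro t
      induction t with
      | zero => intro _; rw [prodMat, one_mulVec]
      | succ t ih =>
        intro ht
        rw [prodMat, ← mulVec_mulVec, ← ih (by omega)]
        exact hstep ⟨t, ht⟩
    have hc : (Real.sqrt (T + 1) : ℂ) ≠ 0 := by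
      rw [Complex.ofReal_ne_zero]
      positivity
    refine ⟨(Real.sqrt (T + 1) : ℂ) •
      fun j => clockSlice T v 0 fun i => if h : (i : ℕ) < m then j ⟨i, h⟩ else 0,
      eq_of_clockSlice_eq hv (vanishesOffUnary_historyState hmn C _) fun t ht => ?_⟩
    rw [clockSlice_historyState hmn C _ ht, inject_smul, inject_restrict hmn hin, mulVec_smul,
      smul_smul, inv_mul_cancel₀ hc, one_smul, hslice t ht]

end History

section Kernel

variable {T n m : ℕ} (C : ℕ → Matrix (Fin n → Fin 2) (Fin n → Fin 2) ℂ)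

theorem kron_eq_kronecker {τ σ : Type} (M : Matrix τ τ ℂ) (N : Matrix σ σ ℂ) :
    kron M N = M ⊗ₖ N :=
  rfl

def propFactor (a : Fin T) :
    Matrix ((Fin T → Fin 2) × (Fin n → Fin 2)) ((Fin T → Fin 2) × (Fin n → Fin 2)) ℂ :=
  Aop T a ⊗ₖ C (a + 1) - ((Aop T a)ᴴ * Aop T a) ⊗ₖ 1

theorem posSemidef_half_propFactor_mul_conjTranspose (a : Fin T) :
    ((1 / 2 : ℂ) • (propFactor C a * (propFactor C a)ᴴ)).PosSemidef :=
  (posSemidef_self_mul_conjTranspose _).smul (by norm_num [Complex.le_def])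

variable {C}

theorem Hprop_eq_sum (hU : ∀ a : Fin T, C (a + 1) ∈ unitaryGroup (Fin n → Fin 2) ℂ) :
    Hprop T n C = ∑ a, (1 / 2 : ℂ) • (propFactor C a * (propFactor C a)ᴴ) := by
  simp only [Hprop, kron_eq_kronecker]
  refine Finset.sum_congr rfl fun a _ => ?_
  rw [propFactor, kronecker_sub_mul_conjTranspose (Aop_mul_conjTranspose_Aop_mul_Aop a)
    (mem_unitaryGroup_iff.1 (hU a))]

theorem conjTranspose_propFactor_mulVec_apply (a : Fin T)
    (w : (Fin T → Fin 2) × (Fin n → Fin 2) → ℂ) (u : Fin T → Fin 2) (b : Fin n → Fin 2) :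
    ((propFactor C a)ᴴ *ᵥ w) (u, b) =
      if CanAdvance T a u then
        ((C (a + 1))ᴴ *ᵥ fun l => w (Function.update u a 1, l)) b - w (u, b)
      else 0 := by
  rw [propFactor, conjTranspose_sub, conjTranspose_kronecker, conjTranspose_kronecker,
    conjTranspose_mul, conjTranspose_conjTranspose, conjTranspose_one, conjTranspose_Aop_mul_Aop,
    sub_mulVec, Pi.sub_apply, kronecker_mulVec_apply, kronecker_mulVec_apply]
  simp only [conjTranspose_Aop_apply, diagonal_apply, one_mulVec]
  split_ifs with hc <;> simp [hc]

theorem conjTranspose_propFactor_mulVec_eq_zero_iff (a : Fin T)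
    {w : (Fin T → Fin 2) × (Fin n → Fin 2) → ℂ} (hw : VanishesOffUnary T w) :
    (propFactor C a)ᴴ *ᵥ w = 0 ↔
      (C (a + 1))ᴴ *ᵥ clockSlice T w (a + 1) = clockSlice T w a := by
  simp only [funext_iff, Prod.forall, Pi.zero_apply, conjTranspose_propFactor_mulVec_apply]
  constructor
  · intro h b
    have := h (unaryClock T a) b
    rw [if_pos (canAdvance_unaryClock_iff.2 rfl), update_unaryClock, sub_eq_zero] at this
    exact this
  · intro h u b
    split_ifs with hc
    · by_cases hu : HasRise T u
      · have : (fun l => w (Function.update u a 1, l)) = 0 :=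
          funext fun l => hw _ l (hc.hasRise_update hu)
        rw [this, mulVec_zero, hw u b hu, Pi.zero_apply, sub_zero]
      · obtain ⟨t, -, rfl⟩ := not_hasRise_iff.1 hu
        obtain rfl := canAdvance_unaryClock_iff.1 hc
        rw [update_unaryClock, sub_eq_zero]
        exact h b
    · rfl

theorem posSemidef_Hin (hT : 0 < T) : (Hin T n m hT).PosSemidef :=
  PosSemidef.diagonal fun p => by dsimp only; split_ifs <;> simp

theorem posSemidef_Hstab : (Hstab T n).PosSemidef :=
  posSemidef_sum _ fun _ _ => PosSemidef.diagonal fun p => by dsimp only; split_ifs <;> simp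

theorem posSemidef_Hprop (hU : ∀ a : Fin T, C (a + 1) ∈ unitaryGroup (Fin n → Fin 2) ℂ) :
    (Hprop T n C).PosSemidef := by
  rw [Hprop_eq_sum hU]
  exact posSemidef_sum _ fun a _ => posSemidef_half_propFactor_mul_conjTranspose C a

theorem Hstab_mulVec_eq_zero_iff {v : (Fin T → Fin 2) × (Fin n → Fin 2) → ℂ} :
    Hstab T n *ᵥ v = 0 ↔ VanishesOffUnary T v := by
  rw [Hstab, PosSemidef.sum_mulVec_eq_zero_iff fun _ _ =>
    PosSemidef.diagonal fun p => by dsimp only; split_ifs <;> simp]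
  simp only [diagonal_mulVec_eq_zero_iff]
  constructor
  · rintro h u b ⟨s, hs, h01⟩
    exact h s (Finset.mem_range.2 (by omega)) (u, b) (by simp [hs, h01])
  · rintro h s - ⟨u, b⟩ hne
    split_ifs at hne with hs h01
    · exact h u b ⟨s, hs, h01⟩
    all_goals exact absurd rfl hne

theorem Hin_mulVec_eq_zero_iff (hT : 0 < T) {v : (Fin T → Fin 2) × (Fin n → Fin 2) → ℂ}
    (hv : VanishesOffUnary T v) :
    Hin T n m hT *ᵥ v = 0 ↔ ∀ b, (∃ i : Fin n, m ≤ i ∧ b i = 1) → clockSlice T v 0 b = 0 := by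
  rw [Hin, diagonal_mulVec_eq_zero_iff]
  constructor
  · rintro h b ⟨i, hi, hbi⟩
    refine h (unaryClock T 0, b) ?_
    rw [if_pos ((unaryClock_apply_eq_zero_iff _).2 (Nat.zero_le _))]
    exact_mod_cast (Finset.card_pos.2 ⟨i, by simp [hi, hbi]⟩).ne'
  · rintro h ⟨u, b⟩ hne
    split_ifs at hne with hu0
    · obtain ⟨i, hi⟩ := Finset.card_ne_zero.1 (by exact_mod_cast hne)
      by_cases hr : HasRise T u
      · exact hv u b hr
      · obtain ⟨t, -, rfl⟩ := not_hasRise_iff.1 hr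
        obtain rfl : t = 0 := by simpa [unaryClock_apply_eq_zero_iff] using hu0
        exact h b ⟨i, by simpa using hi⟩
    · exact absurd rfl hne

theorem Hprop_mulVec_eq_zero_iff (hU : ∀ a : Fin T, C (a + 1) ∈ unitaryGroup (Fin n → Fin 2) ℂ)
    {v : (Fin T → Fin 2) × (Fin n → Fin 2) → ℂ} (hv : VanishesOffUnary T v) :
    Hprop T n C *ᵥ v = 0 ↔ ∀ a : Fin T, clockSlice T v (a + 1) = C (a + 1) *ᵥ clockSlice T v a := by
  rw [Hprop_eq_sum hU,
    PosSemidef.sum_mulVec_eq_zero_iff fun a _ => posSemidef_half_propFactor_mul_conjTranspose C a]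
  simp only [Finset.mem_univ, true_implies, smul_mulVec, smul_eq_zero, one_div, inv_eq_zero,
    two_ne_zero, false_or, self_mul_conjTranspose_mulVec_eq_zero,
    conjTranspose_propFactor_mulVec_eq_zero_iff _ hv, conjTranspose_mulVec_eq_iff (hU _)]

end Kernel

/-- for `T ≥ 1`, `m ≤ n`, and unitaries `C_1, …, C_T` on `(ℂ²)^{⊗n}`, the
unary-clock Feynman–Kitaev Hamiltonian `H' = H_in + H_prop + H_stab` is positive
semidefinite and its kernel is exactly the set of history states `Ψ_ξ` of the circuit
`C_T⋯C_1` on inputs `ξ ⊗ |0⟩^{⊗(n-m)}`. -/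
theorem feynman_kitaev_kernel (T n m : ℕ) (hT : 0 < T) (hmn : m ≤ n)
    (C : ℕ → Matrix (Fin n → Fin 2) (Fin n → Fin 2) ℂ)
    (hC : ∀ t, 1 ≤ t → t ≤ T → C t ∈ Matrix.unitaryGroup (Fin n → Fin 2) ℂ) :
    (Hin T n m hT + Hprop T n C + Hstab T n).PosSemidef ∧
    ∀ v : ((Fin T → Fin 2) × (Fin n → Fin 2)) → ℂ,
      (Hin T n m hT + Hprop T n C + Hstab T n).mulVec v = 0 ↔
        ∃ ξ : (Fin m → Fin 2) → ℂ, v = historyState T n m hmn C ξ := by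
  have hU : ∀ a : Fin T, C (a + 1) ∈ unitaryGroup (Fin n → Fin 2) ℂ :=
    fun a => hC _ (Nat.le_add_left 1 a) a.isLt
  have hin := posSemidef_Hin (m := m) (n := n) hT
  have hprop := posSemidef_Hprop hU
  have hstab := posSemidef_Hstab (T := T) (n := n)
  refine ⟨(hin.add hprop).add hstab, fun v => ?_⟩
  rw [(hin.add hprop).add_mulVec_eq_zero_iff hstab, hin.add_mulVec_eq_zero_iff hprop,
    Hstab_mulVec_eq_zero_iff, exists_eq_historyState_iff]
  constructor
  · rintro ⟨⟨hv_in, hv_prop⟩, hv⟩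
    exact ⟨hv, (Hprop_mulVec_eq_zero_iff hU hv).1 hv_prop, (Hin_mulVec_eq_zero_iff hT hv).1 hv_in⟩
  · rintro ⟨hv, hv_prop, hv_in⟩
    exact ⟨⟨(Hin_mulVec_eq_zero_iff hT hv).2 hv_in, (Hprop_mulVec_eq_zero_iff hU hv).2 hv_prop⟩,
      hv⟩

end FK
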